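/- Let D be a cDG containing every loop and let α,β be nodes joined in D by a weak inducing path consisting solely of blunt edges. Then adding the blunt edge α⫞β to D yields a Markov equivalent cDG. -/

import Mathlib

universe u

/-- A directed correlation graph (cDG): directed edges (loops allowed) and
blunt edges (symmetric, no loops). -/
structure CDG (V : Type u) where
  dir : V → V → Prop
  blunt : V → V → Prop
  blunt_symm : ∀ a b, blunt a b → blunt b a
  blunt_irrefl : ∀ a, ¬ blunt a a

namespace CDG

variable {V : Type u}

/-- `anc D a b` : `a` is an ancestor of `b` (directed path from `a` to `b`;
every node is its own ancestor). -/
def anc (D : CDG V) (a b : V) : Prop := Relation.ReflTransGen D.dir a b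

/-- `an(C)`: the set of ancestors of `C`. -/
def ancSet (D : CDG V) (C : Set V) : Set V := {a | ∃ c ∈ C, D.anc a c}

/-- An edge instance between `a` and `b`, with its orientation. -/
inductive Edge (D : CDG V) : V → V → Type u
  | fwd {a b : V} : D.dir a b → Edge D a b
  | bwd {a b : V} : D.dir b a → Edge D a b
  | bl  {a b : V} : D.blunt a b → Edge D a b

/-- The edge has a neck (head or stump) at its left endpoint. -/
def Edge.neckLeft {D : CDG V} {a b : V} : D.Edge a b → Prop
  | .fwd _ => False
  | .bwd _ => True
  | .bl _ => True

/-- The edge has a neck (head or stump) at its right endpoint. -/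
def Edge.neckRight {D : CDG V} {a b : V} : D.Edge a b → Prop
  | .fwd _ => True
  | .bwd _ => False
  | .bl _ => True

/-- The edge has a head (arrowhead) at its right endpoint. -/
def Edge.headRight {D : CDG V} {a b : V} : D.Edge a b → Prop
  | .fwd _ => True
  | _ => False

/-- The edge is a blunt edge. -/
def Edge.isBlunt {D : CDG V} {a b : V} : D.Edge a b → Prop
  | .bl _ => True
  | _ => False

/-- A walk from `a` to `b` in `D`. -/
inductive Walk (D : CDG V) : V → V → Type u
  | nil (a : V) : Walk D a a
  | cons {a m c : V} : D.Edge a m → Walk D m c → Walk D a c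

namespace Walk

variable {D : CDG V}

def length : ∀ {a b : V}, D.Walk a b → ℕ
  | _, _, .nil _ => 0
  | _, _, .cons _ w => w.length + 1

def support : ∀ {a b : V}, D.Walk a b → List V
  | a, _, .nil _ => [a]
  | a, _, .cons _ w => a :: w.support

/-- The list of nonendpoint (internal) node instances of a walk. -/
def internal : ∀ {a b : V}, D.Walk a b → List V
  | _, _, .nil _ => []
  | _, _, .cons _ (.nil _) => []
  | _, _, .cons (m := m) _ w => m :: w.internal

/-- The final edge of the walk has a head at the terminal node. -/
def lastHead : ∀ {a b : V}, D.Walk a b → Prop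
  | _, _, .nil _ => False
  | _, _, .cons e (.nil _) => e.headRight
  | _, _, .cons _ w => w.lastHead

/-- Every collider on the walk is in `an(C)` and no noncollider is in `C`. -/
def mOpen (C : Set V) : ∀ {a b : V}, D.Walk a b → Prop
  | _, _, .nil _ => True
  | _, _, .cons _ (.nil _) => True
  | _, _, .cons (m := m) e₁ (.cons e₂ w) =>
      ((e₁.neckRight ∧ e₂.neckLeft) → m ∈ D.ancSet C) ∧
      (¬ (e₁.neckRight ∧ e₂.neckLeft) → m ∉ C) ∧
      mOpen C (Walk.cons e₂ w)

/-- Every nonendpoint node of the walk is a collider. -/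
def allColliders : ∀ {a b : V}, D.Walk a b → Prop
  | _, _, .nil _ => True
  | _, _, .cons _ (.nil _) => True
  | _, _, .cons e₁ (.cons e₂ w) =>
      e₁.neckRight ∧ e₂.neckLeft ∧ allColliders (Walk.cons e₂ w)

/-- Every edge of the walk is blunt. -/
def allBlunt : ∀ {a b : V}, D.Walk a b → Prop
  | _, _, .nil _ => True
  | _, _, .cons e w => e.isBlunt ∧ w.allBlunt

end Walk

/-- There is a μ-connecting walk from `a` to `b` given `C`. -/
def muConn (D : CDG V) (C : Set V) (a b : V) : Prop :=
  a ∉ C ∧ ∃ w : D.Walk a b, w.mOpen C ∧ w.lastHead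

/-- `B` is μ-separated from `A` given `C`. -/
def muSep (D : CDG V) (A B C : Set V) : Prop :=
  ∀ a ∈ A, ∀ b ∈ B, ¬ D.muConn C a b

/-- The independence model of `D`: all μ-separation triples. -/
def indep (D : CDG V) : Set (Set V × Set V × Set V) :=
  {p | D.muSep p.1 p.2.1 p.2.2}

/-- A (nontrivial) collider path. -/
def IsColliderPath {D : CDG V} {a b : V} (w : D.Walk a b) : Prop :=
  0 < w.length ∧ w.support.Nodup ∧ w.allColliders

/-- `a` and `b` are collider connected: some nontrivial walk between them has
every nonendpoint node a collider. -/
def colliderConn (D : CDG V) (a b : V) : Prop :=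
  ∃ w : D.Walk a b, 0 < w.length ∧ w.allColliders

/-- A weak inducing path from `a` to `b`: a collider path whose nonendpoint
nodes are all ancestors of `a` or of `b`. -/
def WeakInducing (D : CDG V) (a b : V) : Prop :=
  ∃ w : D.Walk a b, IsColliderPath w ∧ ∀ m ∈ w.internal, D.anc m a ∨ D.anc m b

/-- A weak inducing path between `a` and `b` (in either direction). -/
def WeakInducingBetween (D : CDG V) (a b : V) : Prop :=
  D.WeakInducing a b ∨ D.WeakInducing b a

end CDG

/-- The cDG obtained by adding the blunt edge α⫞β. -/
def CDG.addBlunt {V : Type} (D : CDG V) (α β : V) (hne : α ≠ β) : CDG V where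
  dir := D.dir
  blunt a b := D.blunt a b ∨ (a = α ∧ b = β) ∨ (a = β ∧ b = α)
  blunt_symm := by
    rintro a b (h | ⟨rfl, rfl⟩ | ⟨rfl, rfl⟩)
    · exact Or.inl (D.blunt_symm _ _ h)
    · exact Or.inr (Or.inr ⟨rfl, rfl⟩)
    · exact Or.inr (Or.inl ⟨rfl, rfl⟩)
  blunt_irrefl := by
    rintro a (h | ⟨rfl, h2⟩ | ⟨rfl, h2⟩)
    · exact D.blunt_irrefl a h
    · exact hne h2
    · exact hne h2.symm

/-!
Adding an edge can only create μ-connecting walks, so it suffices to replace each traversal of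
α⫞β in a μ-connecting walk of `D.addBlunt α β` by a walk of `D` that is μ-open given `C` and has
necks at both ends: at α and β such a walk behaves exactly like the blunt edge. It is found on
the blunt weak inducing path α ⫞ m₁ ⫞ ⋯ ⫞ mₖ ⫞ β. Nodes in `an(C)` are passed through as
colliders. If some mᵢ ∉ an(C) is an ancestor of α, restart at the last such node, reached from α
against a directed path mᵢ → ⋯ → α. After it, the first node mⱼ ∉ an(C) is an ancestor of β, and
the walk leaves it along a directed path mⱼ → ⋯ → β. The restart and exit nodes are noncolliders
outside `C`, and so are the nodes of the directed paths, being descendants of them.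
-/

namespace List

theorem exists_eq_append_cons_forall_not {α : Type*} {p : α → Prop} :
    ∀ {l : List α}, (∃ a ∈ l, p a) → ∃ l₁ a l₂, l = l₁ ++ a :: l₂ ∧ p a ∧ ∀ b ∈ l₂, ¬p b
  | [], h => by simp at h
  | x :: l, h => by
      by_cases hl : ∃ a ∈ l, p a
      · obtain ⟨l₁, a, l₂, rfl, ha, hl₂⟩ := exists_eq_append_cons_forall_not hl
        exact ⟨x :: l₁, a, l₂, rfl, ha, hl₂⟩
      · push Not at hl
        obtain ⟨a, ha, hpa⟩ := h
        obtain rfl | ha := mem_cons.mp ha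
        · exact ⟨[], a, l, rfl, hpa, hl⟩
        · exact absurd hpa (hl a ha)

end List

namespace CDG

variable {V : Type u} {D D' : CDG V} {C : Set V}

lemma mem_ancSet_of_mem {x : V} (hx : x ∈ C) : x ∈ D.ancSet C :=
  ⟨x, hx, .refl⟩

lemma mem_ancSet_of_dir {x y : V} (hxy : D.dir x y) (hy : y ∈ D.ancSet C) :
    x ∈ D.ancSet C :=
  let ⟨c, hc, hyc⟩ := hy
  ⟨c, hc, .head hxy hyc⟩

lemma ancSet_eq_of_dir_eq (hdir : D'.dir = D.dir) : D'.ancSet C = D.ancSet C := by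
  simp only [ancSet, anc, hdir]

/-- The condition `mOpen` imposes at a nonendpoint node `m` whose two edges have necks at `m`
exactly when `nr`, resp. `nl`, holds. -/
def OpenJunction (D : CDG V) (C : Set V) (nr nl : Prop) (m : V) : Prop :=
  (nr ∧ nl → m ∈ D.ancSet C) ∧ (¬(nr ∧ nl) → m ∉ C)

lemma OpenJunction.congr {nr nl nr' nl' : Prop} {m : V} (hdir : D'.dir = D.dir)
    (h : D'.OpenJunction C nr nl m) (hr : nr ↔ nr') (hl : nl ↔ nl') :
    D.OpenJunction C nr' nl' m := by
  rwa [OpenJunction, ← hr, ← hl, ← ancSet_eq_of_dir_eq hdir]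

lemma openJunction_of_collider {nr nl : Prop} {m : V} (hr : nr) (hl : nl)
    (hm : m ∈ D.ancSet C) : D.OpenJunction C nr nl m :=
  ⟨fun _ => hm, fun h => absurd ⟨hr, hl⟩ h⟩

lemma openJunction_of_not_collider {nr nl : Prop} {m : V} (h : ¬(nr ∧ nl)) (hm : m ∉ C) :
    D.OpenJunction C nr nl m :=
  ⟨fun h' => absurd h' h, fun _ => hm⟩

namespace Walk

def append : ∀ {a m b : V}, D.Walk a m → D.Walk m b → D.Walk a b
  | _, _, _, .nil _, w₂ => w₂
  | _, _, _, .cons e w, w₂ => .cons e (append w w₂)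

/-- Junk value `True` for `nil`. -/
def neckLeft : ∀ {a b : V}, D.Walk a b → Prop
  | _, _, .nil _ => True
  | _, _, .cons e _ => e.neckLeft

/-- Junk value `True` for `nil`. -/
def neckRight : ∀ {a b : V}, D.Walk a b → Prop
  | _, _, .nil _ => True
  | _, _, .cons e (.nil _) => e.neckRight
  | _, _, .cons _ w => neckRight w

lemma length_append : ∀ {a m b : V} (w₁ : D.Walk a m) (w₂ : D.Walk m b),
    (w₁.append w₂).length = w₁.length + w₂.length
  | _, _, _, .nil _, _ => (Nat.zero_add _).symm
  | _, _, _, .cons _ w, w₂ => by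
      simp only [append, length, length_append w w₂]
      omega

lemma neckRight_cons {a m b : V} (e : D.Edge a m) {w : D.Walk m b} (hw : 0 < w.length) :
    (cons e w).neckRight ↔ w.neckRight := by
  cases w with
  | nil => simp [length] at hw
  | cons => rfl

lemma lastHead_cons {a m b : V} (e : D.Edge a m) {w : D.Walk m b} (hw : 0 < w.length) :
    (cons e w).lastHead ↔ w.lastHead := by
  cases w with
  | nil => simp [length] at hw
  | cons => rfl

lemma mOpen_cons {a m b : V} (e : D.Edge a m) {w : D.Walk m b} (hw : 0 < w.length) :
    (cons e w).mOpen C ↔ D.OpenJunction C e.neckRight w.neckLeft m ∧ w.mOpen C := by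
  cases w with
  | nil => simp [length] at hw
  | cons => exact and_assoc.symm

lemma neckLeft_append {a m b : V} {w₁ : D.Walk a m} (w₂ : D.Walk m b) (h : 0 < w₁.length) :
    (w₁.append w₂).neckLeft ↔ w₁.neckLeft := by
  cases w₁ with
  | nil => simp [length] at h
  | cons => rfl

lemma neckRight_append : ∀ {a m b : V} (w₁ : D.Walk a m) {w₂ : D.Walk m b},
    0 < w₂.length → ((w₁.append w₂).neckRight ↔ w₂.neckRight)
  | _, _, _, .nil _, _, _ => .rfl
  | _, _, _, .cons e w, w₂, h => by
      rw [append, neckRight_cons e (by rw [length_append]; omega), neckRight_append w h]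

lemma lastHead_append : ∀ {a m b : V} (w₁ : D.Walk a m) {w₂ : D.Walk m b},
    0 < w₂.length → ((w₁.append w₂).lastHead ↔ w₂.lastHead)
  | _, _, _, .nil _, _, _ => .rfl
  | _, _, _, .cons e w, w₂, h => by
      rw [append, lastHead_cons e (by rw [length_append]; omega), lastHead_append w h]

lemma mOpen_append : ∀ {a m b : V} (w₁ : D.Walk a m) {w₂ : D.Walk m b},
    0 < w₁.length → 0 < w₂.length →
    ((w₁.append w₂).mOpen C ↔
      w₁.mOpen C ∧ D.OpenJunction C w₁.neckRight w₂.neckLeft m ∧ w₂.mOpen C)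
  | _, _, _, .nil _, _, h₁, _ => by simp [length] at h₁
  | _, _, _, .cons e (.nil _), _, _, h₂ => by
      rw [append, append, mOpen_cons e h₂]
      exact (true_and _).symm.to_iff
  | _, _, _, .cons e (.cons e' w), w₂, _, h₂ => by
      have hw : 0 < (cons e' w).length := Nat.succ_pos _
      rw [append, mOpen_cons e (by rw [length_append]; omega), mOpen_cons e hw,
        neckLeft_append _ hw, mOpen_append _ hw h₂, neckRight_cons e hw, and_assoc]

end Walk

/-- `u` can stand in for the edge `e` of `D'` in a μ-connecting walk given `C`. -/
def Walk.Replaces {a b : V} (C : Set V) (u : D.Walk a b) (e : D'.Edge a b) : Prop :=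
  0 < u.length ∧ u.mOpen C ∧ (u.neckLeft ↔ e.neckLeft) ∧ (u.neckRight ↔ e.neckRight) ∧
    (e.headRight → u.lastHead)

lemma Walk.replaces_cons_nil {a b : V} {e : D'.Edge a b} {e' : D.Edge a b}
    (hl : e'.neckLeft ↔ e.neckLeft) (hr : e'.neckRight ↔ e.neckRight)
    (hh : e.headRight → e'.headRight) : (cons e' (nil b)).Replaces C e :=
  ⟨Nat.succ_pos _, trivial, hl, hr, hh⟩

lemma exists_walk_of_forall_replaces (hdir : D'.dir = D.dir)
    (hrep : ∀ {a b : V} (e : D'.Edge a b), ∃ u : D.Walk a b, u.Replaces C e) :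
    ∀ {a b : V} (w : D'.Walk a b), 0 < w.length →
      ∃ w' : D.Walk a b, 0 < w'.length ∧ (w'.neckLeft ↔ w.neckLeft) ∧
        (w.mOpen C → w'.mOpen C) ∧ (w.lastHead → w'.lastHead)
  | _, _, .nil _, h => absurd h (Nat.lt_irrefl 0)
  | _, _, .cons e (.nil _), _ =>
      let ⟨u, hu₀, hu, hl, _, hh⟩ := hrep e
      ⟨u, hu₀, hl, fun _ => hu, hh⟩
  | _, _, .cons e (.cons e' t), _ => by
      obtain ⟨u, hu₀, hu, hl, hr, -⟩ := hrep e
      obtain ⟨t', ht₀, htl, hto, hth⟩ :=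
        exists_walk_of_forall_replaces hdir hrep (.cons e' t) (Nat.succ_pos _)
      refine ⟨u.append t', by rw [Walk.length_append]; omega,
        Walk.neckLeft_append _ hu₀ |>.trans hl, fun ho => ?_,
        fun h => (Walk.lastHead_append u ht₀).mpr (hth h)⟩
      obtain ⟨hj, hw⟩ := (Walk.mOpen_cons e (w := .cons e' t) (Nat.succ_pos _)).mp ho
      exact (Walk.mOpen_append u hu₀ ht₀).mpr ⟨hu, hj.congr hdir hr.symm htl.symm, hto hw⟩

lemma muConn_of_forall_replaces (hdir : D'.dir = D.dir)
    (hrep : ∀ {a b : V} (e : D'.Edge a b), ∃ u : D.Walk a b, u.Replaces C e) {a b : V}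
    (h : D'.muConn C a b) : D.muConn C a b := by
  obtain ⟨ha, w, hw, hlast⟩ := h
  have hw₀ : 0 < w.length := by
    cases w
    · exact hlast.elim
    · exact Nat.succ_pos _
  obtain ⟨w', -, -, hwo, hwh⟩ := exists_walk_of_forall_replaces hdir hrep w hw₀
  exact ⟨ha, w', hwo hw, hwh hlast⟩

lemma muConn_mono (hdir : D.dir = D'.dir) (hbl : ∀ a b, D.blunt a b → D'.blunt a b) {a b : V}
    (h : D.muConn C a b) : D'.muConn C a b :=
  muConn_of_forall_replaces hdir (fun e => by
    cases e with
    | fwd h => exact ⟨_, Walk.replaces_cons_nil (e' := .fwd (hdir ▸ h)) .rfl .rfl id⟩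
    | bwd h => exact ⟨_, Walk.replaces_cons_nil (e' := .bwd (hdir ▸ h)) .rfl .rfl id⟩
    | bl h => exact ⟨_, Walk.replaces_cons_nil (e' := .bl (hbl _ _ h)) .rfl .rfl id⟩) h

def Walk.NeckedOpen {a b : V} (C : Set V) (u : D.Walk a b) : Prop :=
  0 < u.length ∧ u.mOpen C ∧ u.neckLeft ∧ u.neckRight

lemma Walk.NeckedOpen.replaces_bl {a b : V} {u : D.Walk a b} (hu : u.NeckedOpen C)
    (h : D'.blunt a b) : u.Replaces C (Edge.bl h) :=
  ⟨hu.1, hu.2.1, iff_of_true hu.2.2.1 trivial, iff_of_true hu.2.2.2 trivial, False.elim⟩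

lemma Walk.neckedOpen_cons_bl {x m b : V} (hxm : D.blunt x m) {u : D.Walk m b}
    (hu₀ : 0 < u.length) (hu : u.mOpen C) (hur : u.neckRight)
    (hj : D.OpenJunction C True u.neckLeft m) : (cons (.bl hxm) u).NeckedOpen C :=
  ⟨Nat.succ_pos _, (mOpen_cons _ hu₀).mpr ⟨hj, hu⟩, trivial, (neckRight_cons _ hu₀).mpr hur⟩

lemma exists_mOpen_walk_along {x y : V} (hxy : Relation.TransGen D.dir x y)
    (hx : x ∉ D.ancSet C) :
    ∃ p : D.Walk x y, 0 < p.length ∧ p.mOpen C ∧ ¬p.neckLeft ∧ p.neckRight := by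
  induction hxy using Relation.TransGen.head_induction_on with
  | single h => exact ⟨.cons (.fwd h) (.nil _), Nat.succ_pos _, trivial, not_false, trivial⟩
  | head hxz _ ih =>
      have hz := mt (mem_ancSet_of_dir hxz) hx
      obtain ⟨p, hp₀, hp, hpl, hpr⟩ := ih hz
      refine ⟨.cons (.fwd hxz) p, Nat.succ_pos _, (Walk.mOpen_cons _ hp₀).mpr ⟨?_, hp⟩,
        not_false, (Walk.neckRight_cons _ hp₀).mpr hpr⟩
      exact openJunction_of_not_collider (fun h => hpl h.2) (mt mem_ancSet_of_mem hz)

lemma exists_mOpen_walk_against {x y : V} (hxy : Relation.TransGen D.dir x y)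
    (hx : x ∉ D.ancSet C) :
    ∃ p : D.Walk y x, 0 < p.length ∧ p.mOpen C ∧ p.neckLeft ∧ ¬p.neckRight := by
  induction hxy with
  | single h => exact ⟨.cons (.bwd h) (.nil _), Nat.succ_pos _, trivial, trivial, not_false⟩
  | @tail z y hxz hzy ih =>
      obtain ⟨p, hp₀, hp, hpl, hpr⟩ := ih
      have hz : z ∉ C := fun hzC => hx ⟨z, hzC, hxz.to_reflTransGen⟩
      refine ⟨.cons (.bwd hzy) p, Nat.succ_pos _, (Walk.mOpen_cons _ hp₀).mpr ⟨?_, hp⟩,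
        trivial, (Walk.neckRight_cons _ hp₀).not.mpr hpr⟩
      exact openJunction_of_not_collider (fun h => h.1) hz

lemma exists_neckedOpen_of_isChain {β : V} :
    ∀ {x : V} {L : List V}, (x :: (L ++ [β])).IsChain D.blunt →
      (∀ m ∈ L, m ∈ D.ancSet C ∨ D.anc m β) → ∃ u : D.Walk x β, u.NeckedOpen C
  | _, [], hch, _ =>
      ⟨.cons (.bl (List.isChain_pair.mp hch)) (.nil β), Nat.succ_pos _, trivial, trivial, trivial⟩
  | _, m :: L, hch, hL => by
      rw [List.cons_append, List.isChain_cons_cons] at hch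
      obtain ⟨hxm, hch⟩ := hch
      by_cases hm : m ∈ D.ancSet C
      · obtain ⟨u, hu₀, hu, hul, hur⟩ :=
          exists_neckedOpen_of_isChain hch fun q hq => hL q (.tail _ hq)
        exact ⟨_, Walk.neckedOpen_cons_bl hxm hu₀ hu hur (openJunction_of_collider trivial hul hm)⟩
      obtain rfl | hmβ :=
        Relation.reflTransGen_iff_eq_or_transGen.mp ((hL m (.head _)).resolve_left hm)
      · exact ⟨.cons (.bl hxm) (.nil _), Nat.succ_pos _, trivial, trivial, trivial⟩
      obtain ⟨p, hp₀, hp, hpl, hpr⟩ := exists_mOpen_walk_along hmβ hm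
      exact ⟨_, Walk.neckedOpen_cons_bl hxm hp₀ hp hpr
        (openJunction_of_not_collider (fun h => hpl h.2) (mt mem_ancSet_of_mem hm))⟩

lemma exists_neckedOpen_of_inducing_chain {α β : V} {L : List V}
    (hch : (α :: (L ++ [β])).IsChain D.blunt) (hL : ∀ m ∈ L, D.anc m α ∨ D.anc m β) :
    ∃ u : D.Walk α β, u.NeckedOpen C := by
  by_cases hres : ∃ m ∈ L, m ∉ D.ancSet C ∧ D.anc m α
  swap
  · refine exists_neckedOpen_of_isChain hch fun q hq => ?_
    have := hL q hq
    have := fun h => hres ⟨q, hq, h⟩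
    tauto
  obtain ⟨L₁, m, L₂, rfl, ⟨hm, hmα⟩, hL₂⟩ := List.exists_eq_append_cons_forall_not hres
  rw [List.append_assoc, List.cons_append, List.isChain_cons_split] at hch
  obtain ⟨u, hu₀, hu, hul, hur⟩ := exists_neckedOpen_of_isChain hch.2 fun q hq => by
    have := hL q (by simp [hq])
    have := hL₂ q hq
    tauto
  obtain rfl | hmα := Relation.reflTransGen_iff_eq_or_transGen.mp hmα
  · exact ⟨u, hu₀, hu, hul, hur⟩
  obtain ⟨p, hp₀, hp, hpl, hpr⟩ := exists_mOpen_walk_against hmα hm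
  refine ⟨p.append u, by rw [Walk.length_append]; omega, (Walk.mOpen_append p hp₀ hu₀).mpr
    ⟨hp, ?_, hu⟩, (Walk.neckLeft_append u hp₀).mpr hpl, (Walk.neckRight_append p hu₀).mpr hur⟩
  exact openJunction_of_not_collider (fun h => hpr h.1) (mt mem_ancSet_of_mem hm)

lemma Walk.isChain_blunt_of_allBlunt : ∀ {a b : V} (w : D.Walk a b), 0 < w.length →
    w.allBlunt → (a :: (w.internal ++ [b])).IsChain D.blunt
  | _, _, .cons (.bl h) (.nil _), _, _ => List.isChain_pair.mpr h
  | _, _, .cons (.bl h) (.cons e w), _, hw =>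
      List.isChain_cons_cons.mpr ⟨h, isChain_blunt_of_allBlunt (.cons e w) (Nat.succ_pos _) hw.2⟩
  | _, _, .cons (.fwd _) _, _, hw => hw.1.elim
  | _, _, .cons (.bwd _) _, _, hw => hw.1.elim

lemma isChain_blunt_reverse {α β : V} {L : List V} (h : (α :: (L ++ [β])).IsChain D.blunt) :
    (β :: (L.reverse ++ [α])).IsChain D.blunt := by
  simpa using List.isChain_reverse.mpr (h.imp fun a b hab => D.blunt_symm a b hab)

end CDG

lemma CDG.muConn_of_muConn_addBlunt {V : Type} {D : CDG V} {α β : V} {hne : α ≠ β}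
    {C : Set V} {uab : D.Walk α β} {uba : D.Walk β α} (hab : uab.NeckedOpen C)
    (hba : uba.NeckedOpen C) {a b : V} (h : (D.addBlunt α β hne).muConn C a b) :
    D.muConn C a b :=
  muConn_of_forall_replaces (D := D) (D' := D.addBlunt α β hne) rfl (fun e => by
    cases e with
    | fwd h => exact ⟨_, Walk.replaces_cons_nil (e' := (.fwd h : D.Edge _ _)) .rfl .rfl id⟩
    | bwd h => exact ⟨_, Walk.replaces_cons_nil (e' := (.bwd h : D.Edge _ _)) .rfl .rfl id⟩
    | bl h =>
        rcases h with h | ⟨rfl, rfl⟩ | ⟨rfl, rfl⟩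
        · exact ⟨_, Walk.replaces_cons_nil (e' := .bl h) .rfl .rfl id⟩
        · exact ⟨uab, hab.replaces_bl _⟩
        · exact ⟨uba, hba.replaces_bl _⟩) h

theorem stmt7_general {V : Type} (D : CDG V) (α β : V)
    (hne : α ≠ β)
    (h : ∃ w : D.Walk α β, CDG.IsColliderPath w ∧ w.allBlunt ∧
        ∀ m ∈ w.internal, D.anc m α ∨ D.anc m β) :
    (D.addBlunt α β hne).indep = D.indep := by
  obtain ⟨w, ⟨hw₀, -, -⟩, hblunt, hanc⟩ := h
  have hch := w.isChain_blunt_of_allBlunt hw₀ hblunt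
  have hanc' : ∀ m ∈ w.internal.reverse, D.anc m β ∨ D.anc m α :=
    fun m hm => (hanc m (List.mem_reverse.mp hm)).symm
  ext ⟨A, B, C⟩
  obtain ⟨uab, hab⟩ := CDG.exists_neckedOpen_of_inducing_chain (C := C) hch hanc
  obtain ⟨uba, hba⟩ :=
    CDG.exists_neckedOpen_of_inducing_chain (C := C) (CDG.isChain_blunt_reverse hch) hanc'
  have hconn : ∀ a b, (D.addBlunt α β hne).muConn C a b ↔ D.muConn C a b := fun a b =>
    ⟨CDG.muConn_of_muConn_addBlunt hab hba,
      CDG.muConn_mono (D := D) (D' := D.addBlunt α β hne) rfl fun _ _ => Or.inl⟩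
  simp only [CDG.indep, CDG.muSep, Set.mem_ofPred_eq, hconn]

/-- If α and β are joined by a weak inducing path consisting
solely of blunt edges, then adding α⫞β gives a Markov equivalent cDG. -/
theorem stmt7 {V : Type} (D : CDG V) (hloops : ∀ a, D.dir a a) (α β : V)
    (hne : α ≠ β)
    (h : ∃ w : D.Walk α β, CDG.IsColliderPath w ∧ w.allBlunt ∧
        ∀ m ∈ w.internal, D.anc m α ∨ D.anc m β) :
    (D.addBlunt α β hne).indep = D.indep :=
  stmt7_general D α β hne h
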